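/- If T is a single-elimination tournament with at least 2 players and N total brackets, then for every scoring system σ we have res(T,σ) > N/4. -/
import Mathlib


namespace SETour

variable {V : Type*}

/-- `a` is a player, i.e. a source of the digraph. -/
def IsPlayer (adj : V → V → Prop) (a : V) : Prop := ∀ u, ¬ adj u a

/-- `x` is a match, i.e. a non-source vertex. -/
def IsMatch (adj : V → V → Prop) (x : V) : Prop := ¬ IsPlayer adj x

/-- `z` is a sink, i.e. has no out-neighbors. -/
def IsSink (adj : V → V → Prop) (z : V) : Prop := ∀ w, ¬ adj z w

/-- A single-elimination tournament: exactly one sink, every non-sink vertex has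
exactly one out-neighbor (at most one out-neighbor in general), no directed cycles,
and no vertex has exactly one in-neighbor. -/
structure IsSETournament (adj : V → V → Prop) : Prop where
  unique_sink : ∃! z, IsSink adj z
  out_unique : ∀ ⦃v w w'⦄, adj v w → adj v w' → w = w'
  acyclic : ∀ v, ¬ Relation.TransGen adj v v
  in_ne_one : ∀ v, {u | adj u v}.ncard ≠ 1

/-- The set of players of the tournament. -/
def players (adj : V → V → Prop) : Set V := {a | IsPlayer adj a}

/-- The player set `P(u)`: all players having a directed walk to `u`. -/
def playerSet (adj : V → V → Prop) (u : V) : Set V :=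
  {a | IsPlayer adj a ∧ Relation.ReflTransGen adj a u}

/-- A bracket: a function from vertices to players fixing players, in which the
winner of each match is the winner of one of the matches feeding into it. -/
structure IsBracket (adj : V → V → Prop) (B : V → V) : Prop where
  toPlayer : ∀ v, IsPlayer adj (B v)
  player_fix : ∀ a, IsPlayer adj a → B a = a
  match_pred : ∀ x, IsMatch adj x → ∃ u, adj u x ∧ B x = B u

/-- A scoring system: positive reals on matches. -/
def IsScoring (adj : V → V → Prop) (σ : V → ℝ) : Prop :=
  ∀ x, IsMatch adj x → 0 < σ x

/-- The σ-score of two brackets: the sum of σ over the matches on which they agree. -/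
noncomputable def score (adj : V → V → Prop) (σ : V → ℝ) (B B' : V → V) : ℝ :=
  ∑ᶠ x ∈ {x | IsMatch adj x ∧ B x = B' x}, σ x

/-- A set of brackets is σ-resolving if any two distinct brackets are
distinguished by their σ-score against some member of the set. -/
def IsResolving (adj : V → V → Prop) (σ : V → ℝ) (𝓑 : Set (V → V)) : Prop :=
  ∀ B B' : V → V, IsBracket adj B → IsBracket adj B' → B ≠ B' →
    ∃ Bi ∈ 𝓑, score adj σ Bi B ≠ score adj σ Bi B'

/-- The metric dimension: minimum size of a σ-resolving set of brackets. -/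
noncomputable def dimT (adj : V → V → Prop) (σ : V → ℝ) : ℕ :=
  sInf {n | ∃ 𝓑 : Set (V → V), (∀ B ∈ 𝓑, IsBracket adj B) ∧
    IsResolving adj σ 𝓑 ∧ 𝓑.ncard = n}

/-- The resolving number: minimum `r` such that every set of `r` distinct
brackets is σ-resolving. -/
noncomputable def resT (adj : V → V → Prop) (σ : V → ℝ) : ℕ :=
  sInf {r | ∀ 𝓑 : Set (V → V), (∀ B ∈ 𝓑, IsBracket adj B) → 𝓑.ncard = r →
    IsResolving adj σ 𝓑}

/-- `x` is the match where players `a` and `b` face off: it has in-neighbors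
`u_a, u_b` with `P(u_a) ∩ {a,b} = {a}` and `P(u_b) ∩ {a,b} = {b}`. -/
def IsPairMatch (adj : V → V → Prop) (a b x : V) : Prop :=
  ∃ ua ub, adj ua x ∧ adj ub x ∧
    playerSet adj ua ∩ {a, b} = {a} ∧ playerSet adj ub ∩ {a, b} = {b}

open Classical in
/-- The bracket obtained from `B` by making player `a` win every match it can. -/
noncomputable def favBracket (adj : V → V → Prop) (B : V → V) (a : V) : V → V :=
  fun u => if a ∈ playerSet adj u then a else B u

/-- A scoring system has distinct subset sums if distinct sets of matches have
distinct total scores. -/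
def DistinctSubsetSums (adj : V → V → Prop) (σ : V → ℝ) : Prop :=
  ∀ M M' : Set V, (∀ x ∈ M, IsMatch adj x) → (∀ x ∈ M', IsMatch adj x) →
    ∑ᶠ x ∈ M, σ x = ∑ᶠ x ∈ M', σ x → M = M'

/-- The quantity `max_{x ∈ M(T)} (|P(x)| − max_{u ∈ N⁻(x)} |P(u)|)`. -/
noncomputable def lbound (adj : V → V → Prop) : ℕ :=
  sSup {k | ∃ x, IsMatch adj x ∧
    k = (playerSet adj x).ncard - sSup {m | ∃ u, adj u x ∧ m = (playerSet adj u).ncard}}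

/-- The vertex set of the sub-tournament `T_u`: vertices `v` with `P(v) ⊆ P(u)`. -/
def subVert (adj : V → V → Prop) (u : V) : Set V :=
  {v | playerSet adj v ⊆ playerSet adj u}

/-- The adjacency relation of the sub-tournament `T_u`. -/
def subAdj (adj : V → V → Prop) (u : V) : subVert adj u → subVert adj u → Prop :=
  fun v w => adj v.1 w.1

/-- A standard single-elimination tournament: one obtained from a complete
(perfect) binary tree by orienting all edges towards its root.  Equivalently, a
single-elimination tournament in which every match has exactly two in-neighbors
and all players are at the same distance from the sink (witnessed by a depth
function decreasing by 1 along every edge and constant on players). -/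
def IsStandard (adj : V → V → Prop) : Prop :=
  IsSETournament adj ∧
  (∀ x, IsMatch adj x → {u | adj u x}.ncard = 2) ∧
  ∃ (d : V → ℕ) (r : ℕ), (∀ v w, adj v w → d v = d w + 1) ∧
    ∀ a, IsPlayer adj a → d a = r

set_option linter.unusedSectionVars false
set_option linter.unusedVariables false
section Aux
variable [Finite V] [DecidableEq V] {adj : V → V → Prop} {z u u' v w x a b : V} {B : V → V}
open Relation Set

lemma wf_adj (hT : IsSETournament adj) : WellFounded adj := by
  haveI : IsTrans V (Relation.TransGen adj) := ⟨fun _ _ _ => Relation.TransGen.trans⟩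
  haveI : IsIrrefl V (Relation.TransGen adj) := ⟨hT.acyclic⟩
  exact Subrelation.wf (fun h => Relation.TransGen.single h)
    (Finite.wellFounded_of_trans_of_irrefl _)

lemma wf_flip (hT : IsSETournament adj) : WellFounded (fun a b => adj b a) := by
  haveI : IsTrans V (Relation.TransGen fun a b => adj b a) :=
    ⟨fun _ _ _ => Relation.TransGen.trans⟩
  haveI : IsIrrefl V (Relation.TransGen fun a b => adj b a) := ⟨by
    intro v hv
    exact hT.acyclic v ((Relation.transGen_swap).mp hv)⟩
  have h1 : WellFounded (Relation.TransGen fun a b => adj b a) :=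
    Finite.wellFounded_of_trans_of_irrefl _
  exact @Subrelation.wf V (Relation.TransGen fun a b => adj b a) (fun a b => adj b a)
    (fun {a b} h => Relation.TransGen.single h) h1

lemma reach_sink (hT : IsSETournament adj) (hz : IsSink adj z) (v : V) :
    Relation.ReflTransGen adj v z := by
  induction v using (wf_flip hT).induction with
  | _ v IH =>
    by_cases h : IsSink adj v
    · rw [hT.unique_sink.unique h hz]
    · obtain ⟨w, hw⟩ := not_forall_not.mp h
      exact Relation.ReflTransGen.head hw (IH w hw)

lemma playerSet_nonempty (hT : IsSETournament adj) (v : V) :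
    (playerSet adj v).Nonempty := by
  induction v using (wf_adj hT).induction with
  | _ v IH =>
    by_cases h : IsPlayer adj v
    · exact ⟨v, h, Relation.ReflTransGen.refl⟩
    · obtain ⟨u, hu⟩ := not_forall_not.mp h
      obtain ⟨a, ha, hwalk⟩ := IH u hu
      exact ⟨a, ha, hwalk.tail hu⟩

lemma playerSet_mono_rtg (h : Relation.ReflTransGen adj v w) :
    playerSet adj v ⊆ playerSet adj w := fun a ⟨hp, hw⟩ => ⟨hp, hw.trans h⟩

lemma playerSet_mono (h : adj v w) : playerSet adj v ⊆ playerSet adj w :=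
  playerSet_mono_rtg (Relation.ReflTransGen.single h)

lemma playerSet_player (hp : IsPlayer adj u) : playerSet adj u = {u} := by
  ext a
  constructor
  · rintro ⟨hap, hw⟩
    rcases hw.cases_tail with h | ⟨b, _, hb⟩
    · simp [h]
    · exact absurd hb (hp b)
  · rintro rfl
    exact ⟨hp, Relation.ReflTransGen.refl⟩

lemma walks_comparable (hT : IsSETournament adj) (h : Relation.ReflTransGen adj a u)
    (h' : Relation.ReflTransGen adj a u') :
    Relation.ReflTransGen adj u u' ∨ Relation.ReflTransGen adj u' u := by
  induction h using Relation.ReflTransGen.head_induction_on generalizing u' with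
  | refl => exact Or.inl h'
  | head hac hcu IH =>
    rcases h'.cases_head with rfl | ⟨c', hac', hc'u'⟩
    · exact Or.inr (Relation.ReflTransGen.head hac hcu)
    · rw [hT.out_unique hac' hac] at hc'u'  -- hope orientation works
      exact IH hc'u'

lemma branches_disjoint (hT : IsSETournament adj) (hux : adj u x) (hu'x : adj u' x)
    (hne : u ≠ u') (ha : a ∈ playerSet adj u) (ha' : a ∈ playerSet adj u') : False := by
  have key : ∀ ⦃p q : V⦄, adj p x → adj q x → p ≠ q →
      Relation.ReflTransGen adj p q → False := by
    intro p q hp hq hpq hw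
    rcases hw.cases_head with rfl | ⟨c, hpc, hcq⟩
    · exact hpq rfl
    · rw [hT.out_unique hpc hp] at hcq
      exact hT.acyclic x (Relation.TransGen.tail' hcq hq)
  rcases walks_comparable hT ha.2 ha'.2 with h | h
  · exact key hux hu'x hne h
  · exact key hu'x hux (Ne.symm hne) h

lemma bracket_mem (hT : IsSETournament adj) (hB : IsBracket adj B) (v : V) :
    B v ∈ playerSet adj v := by
  induction v using (wf_adj hT).induction with
  | _ v IH =>
    by_cases h : IsPlayer adj v
    · rw [hB.player_fix v h]; exact ⟨h, Relation.ReflTransGen.refl⟩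
    · obtain ⟨u, hu, heq⟩ := hB.match_pred v h
      rw [heq]
      exact playerSet_mono hu (IH u hu)

lemma bracket_branch_eq (hT : IsSETournament adj) (hB : IsBracket adj B)
    (hx : IsMatch adj x) (hu : adj u x) (h : B x ∈ playerSet adj u) : B x = B u := by
  obtain ⟨w, hw, heq⟩ := hB.match_pred x hx
  have hBw : B x ∈ playerSet adj w := heq ▸ bracket_mem hT hB w
  by_cases hwu : w = u
  · exact hwu ▸ heq
  · exact absurd (branches_disjoint hT hw hu hwu hBw h) not_false


noncomputable def inNbr (adj : V → V → Prop) {v : V} (h : IsMatch adj v) : V :=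
  Classical.choose (not_forall_not.mp h)

lemma inNbr_adj (h : IsMatch adj v) : adj (inNbr adj h) v :=
  Classical.choose_spec (not_forall_not.mp h)

open Classical in
noncomputable def base (hT : IsSETournament adj) : V → V :=
  (wf_adj hT).fix (fun v IH =>
    if h : IsPlayer adj v then v else IH (inNbr adj h) (inNbr_adj h))

open Classical in
lemma base_eq (hT : IsSETournament adj) (v : V) :
    base hT v = if h : IsPlayer adj v then v else base hT (inNbr adj h) := by
  rw [base, WellFounded.fix_eq]

lemma base_isBracket (hT : IsSETournament adj) : IsBracket adj (base hT) := by
  refine ⟨?_, ?_, ?_⟩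
  · intro v
    induction v using (wf_adj hT).induction with
    | _ v IH =>
      rw [base_eq]
      by_cases h : IsPlayer adj v
      · rwa [dif_pos h]
      · rw [dif_neg h]; exact IH _ (inNbr_adj h)
  · intro a ha; rw [base_eq, dif_pos ha]
  · intro x hx
    exact ⟨inNbr adj hx, inNbr_adj hx, by rw [base_eq, dif_neg hx]⟩

lemma favBracket_isBracket (hT : IsSETournament adj) (hB : IsBracket adj B)
    (ha : IsPlayer adj a) : IsBracket adj (favBracket adj B a) := by
  refine ⟨?_, ?_, ?_⟩
  · intro v
    unfold favBracket
    split
    · exact ha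
    · exact hB.toPlayer v
  · intro c hc
    unfold favBracket
    split
    · next h => rw [playerSet_player hc] at h; exact h
    · exact hB.player_fix c hc
  · intro x hx
    by_cases h : a ∈ playerSet adj x
    · have hax : Relation.ReflTransGen adj a x := h.2
      rcases hax.cases_tail with heq | ⟨u, hau, hux⟩
      · exact absurd (heq ▸ ha) hx
      · refine ⟨u, hux, ?_⟩
        have hu : a ∈ playerSet adj u := ⟨ha, hau⟩
        unfold favBracket
        rw [if_pos h, if_pos hu]
    · obtain ⟨u, hux, heq⟩ := hB.match_pred x hx
      refine ⟨u, hux, ?_⟩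
      have hu : a ∉ playerSet adj u := fun hu => h (playerSet_mono hux hu)
      unfold favBracket
      rw [if_neg h, if_neg hu]
      exact heq

lemma favBracket_eq (h : a ∈ playerSet adj u) : favBracket adj B a u = a :=
  if_pos h

lemma favBracket_eq_of_not (h : a ∉ playerSet adj u) : favBracket adj B a u = B u :=
  if_neg h


lemma sink_ne (hzs : IsSink adj z) (h : adj u z) : u ≠ z :=
  fun he => hzs z (he ▸ h)

lemma sink_isMatch (hT : IsSETournament adj) (h2 : 2 ≤ (players adj).ncard)
    (hzs : IsSink adj z) : IsMatch adj z := by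
  intro hzp
  obtain ⟨a, b, ha, hb, hab⟩ := (Set.one_lt_ncard_iff (Set.toFinite _)).mp h2
  have key : ∀ c : V, IsPlayer adj c → c ≠ z → False := by
    intro c hc hcz
    rcases (reach_sink hT hzs c).cases_tail with heq | ⟨w, _, hwz⟩
    · exact hcz heq.symm
    · exact hzp w hwz
  by_cases haz : a = z
  · exact key b hb (fun hbz => hab (haz.trans hbz.symm))
  · exact key a ha haz

lemma two_inNbrs (hT : IsSETournament adj) (hx : IsMatch adj x) :
    ∃ u u', adj u x ∧ adj u' x ∧ u ≠ u' := by
  have hne : ({u | adj u x}).Nonempty := ⟨inNbr adj hx, inNbr_adj hx⟩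
  have h1 : 1 ≤ ({u | adj u x}).ncard := (Set.ncard_pos (Set.toFinite _)).mpr hne
  have h2 : 1 < ({u | adj u x}).ncard :=
    lt_of_le_of_ne h1 (fun h => hT.in_ne_one x h.symm)
  obtain ⟨u, u', hu, hu', hne'⟩ := (Set.one_lt_ncard_iff (Set.toFinite _)).mp h2
  exact ⟨u, u', hu, hu', hne'⟩

lemma update_bracket (hT : IsSETournament adj) (hzs : IsSink adj z) (hzm : IsMatch adj z)
    (hB : IsBracket adj B) (hu : adj u z) :
    IsBracket adj (Function.update B z (B u)) := by
  refine ⟨?_, ?_, ?_⟩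
  · intro v
    by_cases hv : v = z
    · subst hv; rw [Function.update_self]; exact hB.toPlayer u
    · rw [Function.update_of_ne hv]; exact hB.toPlayer v
  · intro c hc
    have hcz : c ≠ z := fun he => hzm (he ▸ hc)
    rw [Function.update_of_ne hcz]; exact hB.player_fix c hc
  · intro x hx
    by_cases hxz : x = z
    · subst hxz
      exact ⟨u, hu, by rw [Function.update_self, Function.update_of_ne (sink_ne hzs hu)]⟩
    · obtain ⟨w, hwx, heq⟩ := hB.match_pred x hx
      have hwz : w ≠ z := fun he => hzs x (he ▸ hwx)
      exact ⟨w, hwx, by rw [Function.update_of_ne hxz, Function.update_of_ne hwz]; exact heq⟩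

lemma Sb_ncard_eq (hT : IsSETournament adj) (hzs : IsSink adj z) (hzm : IsMatch adj z)
    (hu : adj u z) (hu' : adj u' z) (hne : u ≠ u') :
    {B | IsBracket adj B ∧ B z ∈ playerSet adj u}.ncard =
      {B | IsBracket adj B ∧ B z ∈ playerSet adj u'}.ncard := by
  set S := {B | IsBracket adj B ∧ B z ∈ playerSet adj u} with hS
  set S' := {B | IsBracket adj B ∧ B z ∈ playerSet adj u'} with hS'
  set Φ : (V → V) → (V → V) := fun B => Function.update B z (B u') with hΦ
  have hmaps : ∀ B ∈ S, Φ B ∈ S' := by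
    rintro B ⟨hB, _⟩
    refine ⟨update_bracket hT hzs hzm hB hu', ?_⟩
    show Function.update B z (B u') z ∈ _
    rw [Function.update_self]
    exact bracket_mem hT hB u'
  have hval : ∀ B ∈ S, B z = B u := by
    rintro B ⟨hB, hBz⟩
    exact bracket_branch_eq hT hB hzm hu hBz
  have hval' : ∀ B ∈ S', B z = B u' := by
    rintro B ⟨hB, hBz⟩
    exact bracket_branch_eq hT hB hzm hu' hBz
  have himg : Φ '' S = S' := by
    apply Set.Subset.antisymm
    · rintro _ ⟨B, hBS, rfl⟩; exact hmaps B hBS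
    · rintro B hBS'
      obtain ⟨hB, hBz⟩ := hBS'
      refine ⟨Function.update B z (B u), ⟨update_bracket hT hzs hzm hB hu, ?_⟩, ?_⟩
      · show Function.update B z (B u) z ∈ _
        rw [Function.update_self]; exact bracket_mem hT hB u
      · show Function.update _ z (Function.update B z (B u) u') = B
        rw [Function.update_of_ne (sink_ne hzs hu'), Function.update_idem,
          ← hval' B ⟨hB, hBz⟩, Function.update_eq_self]
  have hinj : S.InjOn Φ := by
    rintro B1 hB1 B2 hB2 heq
    funext v
    by_cases hv : v = z
    · rw [hv]
      have e2 : Function.update B1 z (B1 u') u = Function.update B2 z (B2 u') u :=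
        congrFun heq u
      rw [Function.update_of_ne (sink_ne hzs hu),
        Function.update_of_ne (sink_ne hzs hu)] at e2
      rw [hval B1 hB1, e2, ← hval B2 hB2]
    · have e3 : Function.update B1 z (B1 u') v = Function.update B2 z (B2 u') v :=
        congrFun heq v
      rwa [Function.update_of_ne hv, Function.update_of_ne hv] at e3
  rw [← himg, Set.ncard_image_of_injOn hinj]


lemma key_lemma (hT : IsSETournament adj) (h2 : 2 ≤ (players adj).ncard) :
    ∃ B B' : V → V, IsBracket adj B ∧ IsBracket adj B' ∧ B ≠ B' ∧
      ∃ G : Set (V → V), (∀ Bi ∈ G, IsBracket adj Bi) ∧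
        (∀ σ : V → ℝ, ∀ Bi ∈ G, score adj σ Bi B = score adj σ Bi B') ∧
        {B : V → V | IsBracket adj B}.ncard / 4 ≤ G.ncard := by
  classical
  obtain ⟨z, hzs, -⟩ := hT.unique_sink
  have hzm := sink_isMatch hT h2 hzs
  obtain ⟨u1, u2, hu1, hu2, hne12⟩ := two_inNbrs hT hzm
  set 𝔅 : Set (V → V) := {B | IsBracket adj B} with h𝔅
  set Sp : V → Set (V → V) := fun a => {B | IsBracket adj B ∧ B z = a} with hSp
  set Sb : V → Set (V → V) := fun u => {B | IsBracket adj B ∧ B z ∈ playerSet adj u}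
    with hSb
  have hSpSb : ∀ (a u : V), a ∈ playerSet adj u → Sp a ⊆ Sb u := by
    rintro a u ha B ⟨hB, hBz⟩; exact ⟨hB, hBz ▸ ha⟩
  have hSb𝔅 : ∀ u : V, Sb u ⊆ 𝔅 := fun u B hB => hB.1
  have hSp𝔅 : ∀ a : V, Sp a ⊆ 𝔅 := fun a B hB => hB.1
  have hdisjSb : ∀ u u' : V, adj u z → adj u' z → u ≠ u' → Disjoint (Sb u) (Sb u') := by
    intro u u' hu hu' hne
    rw [Set.disjoint_left]
    rintro B ⟨hB, h1⟩ ⟨_, h2⟩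
    exact branches_disjoint hT hu hu' hne h1 h2
  have hdisjSp : ∀ a b : V, a ≠ b → Disjoint (Sp a) (Sp b) := by
    intro a b hne
    rw [Set.disjoint_left]
    rintro B ⟨hB, h1⟩ ⟨_, h2⟩
    exact hne (h1 ▸ h2)
  have main : ∃ w1 w2 a b : V, adj w1 z ∧ adj w2 z ∧ w1 ≠ w2 ∧
      a ∈ playerSet adj w1 ∧ b ∈ playerSet adj w2 ∧
      𝔅.ncard / 4 + (Sp a).ncard + (Sp b).ncard ≤ 𝔅.ncard := by
    have hcard12 : (Sb u1).ncard = (Sb u2).ncard := Sb_ncard_eq hT hzs hzm hu1 hu2 hne12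
    by_cases hthird : ∃ u3, adj u3 z ∧ u3 ≠ u1 ∧ u3 ≠ u2
    · obtain ⟨u3, hu3, h31, h32⟩ := hthird
      obtain ⟨a, ha⟩ := playerSet_nonempty hT u1
      obtain ⟨b, hb⟩ := playerSet_nonempty hT u2
      have hcard13 : (Sb u1).ncard = (Sb u3).ncard := Sb_ncard_eq hT hzs hzm hu1 hu3 (Ne.symm h31)
      have hsub : Sb u1 ∪ Sb u2 ∪ Sb u3 ⊆ 𝔅 := by
        intro B hB
        rcases hB with hB | hB
        · rcases hB with hB | hB
          · exact hSb𝔅 u1 hB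
          · exact hSb𝔅 u2 hB
        · exact hSb𝔅 u3 hB
      have hcup : (Sb u1 ∪ Sb u2 ∪ Sb u3).ncard =
          (Sb u1).ncard + (Sb u2).ncard + (Sb u3).ncard := by
        rw [Set.ncard_union_eq (by
          exact Set.disjoint_union_left.mpr
            ⟨hdisjSb u1 u3 hu1 hu3 (Ne.symm h31), hdisjSb u2 u3 hu2 hu3 (Ne.symm h32)⟩)
          (Set.toFinite _) (Set.toFinite _),
          Set.ncard_union_eq (hdisjSb u1 u2 hu1 hu2 hne12) (Set.toFinite _) (Set.toFinite _)]
      have h3s : (Sb u1).ncard + (Sb u2).ncard + (Sb u3).ncard ≤ 𝔅.ncard := by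
        rw [← hcup]; exact Set.ncard_le_ncard hsub (Set.toFinite _)
      have hSa : (Sp a).ncard ≤ (Sb u1).ncard :=
        Set.ncard_le_ncard (hSpSb a u1 ha) (Set.toFinite _)
      have hSbb : (Sp b).ncard ≤ (Sb u2).ncard :=
        Set.ncard_le_ncard (hSpSb b u2 hb) (Set.toFinite _)
      exact ⟨u1, u2, a, b, hu1, hu2, hne12, ha, hb, by omega⟩
    · push_neg at hthird
      have hIn : ∀ w : V, adj w z → w = u1 ∨ w = u2 := by
        intro w hw
        by_contra hcon
        push_neg at hcon
        exact hcon.2 (hthird w hw hcon.1)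
      have hcover : 𝔅 = Sb u1 ∪ Sb u2 := by
        apply Set.Subset.antisymm
        · intro B hB
          obtain ⟨w, hwz, heq⟩ := hB.match_pred z hzm
          have hmem : B z ∈ playerSet adj w := heq ▸ bracket_mem hT hB w
          rcases hIn w hwz with rfl | rfl
          · exact Or.inl ⟨hB, hmem⟩
          · exact Or.inr ⟨hB, hmem⟩
        · intro B hB
          rcases hB with hB | hB
          · exact hB.1
          · exact hB.1
      have hNss : 𝔅.ncard = (Sb u1).ncard + (Sb u2).ncard := by
        rw [hcover, Set.ncard_union_eq (hdisjSb u1 u2 hu1 hu2 hne12) (Set.toFinite _)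
          (Set.toFinite _)]
      -- helper for the "some branch has ≥ 2 players" case
      have branch2 : ∀ w1 w2 : V, adj w1 z → adj w2 z → w1 ≠ w2 →
          (Sb w1).ncard = (Sb w2).ncard →
          𝔅.ncard = (Sb w1).ncard + (Sb w2).ncard →
          (∃ p q : V, p ∈ playerSet adj w1 ∧ q ∈ playerSet adj w1 ∧ p ≠ q) →
          ∃ a b : V, a ∈ playerSet adj w1 ∧ b ∈ playerSet adj w2 ∧
            𝔅.ncard / 4 + (Sp a).ncard + (Sp b).ncard ≤ 𝔅.ncard := by
        rintro w1 w2 hw1 hw2 hww hss hNs ⟨p, q, hp, hq, hpq⟩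
        obtain ⟨b, hb⟩ := playerSet_nonempty hT w2
        have hpq' : (Sp p).ncard + (Sp q).ncard ≤ (Sb w1).ncard := by
          have := Set.ncard_le_ncard
            (Set.union_subset (hSpSb p w1 hp) (hSpSb q w1 hq)) (Set.toFinite (Sb w1))
          rwa [Set.ncard_union_eq (hdisjSp p q hpq) (Set.toFinite _) (Set.toFinite _)] at this
        have hbb : (Sp b).ncard ≤ (Sb w2).ncard :=
          Set.ncard_le_ncard (hSpSb b w2 hb) (Set.toFinite _)
        rcases le_total (Sp p).ncard (Sp q).ncard with hle | hle
        · exact ⟨p, b, hp, hb, by omega⟩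
        · exact ⟨q, b, hq, hb, by omega⟩
      by_cases htwo1 : ∃ p q : V, p ∈ playerSet adj u1 ∧ q ∈ playerSet adj u1 ∧ p ≠ q
      · obtain ⟨a, b, ha, hb, hc⟩ := branch2 u1 u2 hu1 hu2 hne12 hcard12 hNss htwo1
        exact ⟨u1, u2, a, b, hu1, hu2, hne12, ha, hb, hc⟩
      · by_cases htwo2 : ∃ p q : V, p ∈ playerSet adj u2 ∧ q ∈ playerSet adj u2 ∧ p ≠ q
        · obtain ⟨a, b, ha, hb, hc⟩ := branch2 u2 u1 hu2 hu1 (Ne.symm hne12) hcard12.symm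
            (by omega) htwo2
          exact ⟨u2, u1, a, b, hu2, hu1, Ne.symm hne12, ha, hb, hc⟩
        · -- both branches have a single player
          obtain ⟨a, ha⟩ := playerSet_nonempty hT u1
          obtain ⟨b, hb⟩ := playerSet_nonempty hT u2
          push_neg at htwo1 htwo2
          have hone1 : ∀ c ∈ playerSet adj u1, c = a := fun c hc => by
            exact htwo1 c a hc ha
          have hone2 : ∀ c ∈ playerSet adj u2, c = b := fun c hc => by
            exact htwo2 c b hc hb
          have claim : ∀ B1 B2 : V → V, IsBracket adj B1 → IsBracket adj B2 →
              B1 z = B2 z → B1 = B2 := by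
            intro B1 B2 hB1 hB2 hz12
            funext v
            by_cases hp : IsPlayer adj v
            · rw [hB1.player_fix v hp, hB2.player_fix v hp]
            · have hvz : v = z := by
                by_contra hvz
                rcases (reach_sink hT hzs v).cases_tail with heq | ⟨w, hvw, hwz⟩
                · exact hvz heq.symm
                · obtain ⟨q1, q2, hq1, hq2, hqq⟩ := two_inNbrs hT hp
                  obtain ⟨c1, hc1⟩ := playerSet_nonempty hT q1
                  obtain ⟨c2, hc2⟩ := playerSet_nonempty hT q2
                  have hcc : c1 ≠ c2 := fun he =>
                    branches_disjoint hT hq1 hq2 hqq hc1 (he ▸ hc2)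
                  have hc1v : c1 ∈ playerSet adj w :=
                    playerSet_mono_rtg hvw (playerSet_mono hq1 hc1)
                  have hc2v : c2 ∈ playerSet adj w :=
                    playerSet_mono_rtg hvw (playerSet_mono hq2 hc2)
                  rcases hIn w hwz with rfl | rfl
                  · exact hcc ((hone1 c1 hc1v).trans (hone1 c2 hc2v).symm)
                  · exact hcc ((hone2 c1 hc1v).trans (hone2 c2 hc2v).symm)
              rw [hvz]; exact hz12
          have hSple : ∀ c : V, (Sp c).ncard ≤ 1 := by
            intro c
            rcases Set.eq_empty_or_nonempty (Sp c) with he | ⟨F, hF⟩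
            · simp [he]
            · have hsub : Sp c ⊆ {F} := by
                rintro B ⟨hB, hBz⟩
                exact Set.mem_singleton_iff.mpr
                  (claim B F hB hF.1 (hBz.trans hF.2.symm))
              calc (Sp c).ncard ≤ ({F} : Set (V → V)).ncard :=
                    Set.ncard_le_ncard hsub (Set.toFinite _)
                _ = 1 := Set.ncard_singleton F
          have hSb1 : Sb u1 ⊆ Sp a := by
            rintro B ⟨hB, hBz⟩; exact ⟨hB, hone1 _ hBz⟩
          have hs1 : (Sb u1).ncard ≤ 1 :=
            le_trans (Set.ncard_le_ncard hSb1 (Set.toFinite _)) (hSple a)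
          have hab : a ≠ b := fun he =>
            branches_disjoint hT hu1 hu2 hne12 ha (he ▸ hb)
          have hsum : (Sp a).ncard + (Sp b).ncard ≤ 𝔅.ncard := by
            have := Set.ncard_le_ncard
              (Set.union_subset (hSp𝔅 a) (hSp𝔅 b)) (Set.toFinite 𝔅)
            rwa [Set.ncard_union_eq (hdisjSp a b hab) (Set.toFinite _) (Set.toFinite _)] at this
          exact ⟨u1, u2, a, b, hu1, hu2, hne12, ha, hb, by omega⟩
  -- construction of the pair and the set G
  obtain ⟨w1, w2, a, b, hw1, hw2, hww, ha, hb, hcount⟩ := main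
  have hpa : IsPlayer adj a := ha.1
  have hpb : IsPlayer adj b := hb.1
  have hab : a ≠ b := fun he => branches_disjoint hT hw1 hw2 hww ha (he ▸ hb)
  set C2 : V → V := favBracket adj (favBracket adj (base hT) b) a with hC2def
  have hC2 : IsBracket adj C2 :=
    favBracket_isBracket hT (favBracket_isBracket hT (base_isBracket hT) hpb) hpa
  have hC2z : C2 z = a := favBracket_eq (playerSet_mono hw1 ha)
  have hC2w2 : C2 w2 = b := by
    have hnaw2 : a ∉ playerSet adj w2 := fun hmem =>
      branches_disjoint hT hw1 hw2 hww ha hmem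
    rw [hC2def, favBracket_eq_of_not hnaw2, favBracket_eq hb]
  set B' : V → V := Function.update C2 z (C2 w2) with hB'def
  have hB' : IsBracket adj B' := update_bracket hT hzs hzm hC2 hw2
  have hB'z : B' z = b := by rw [hB'def, Function.update_self, hC2w2]
  have hneBB : C2 ≠ B' := fun h => hab (by rw [← hC2z, ← hB'z, h])
  refine ⟨C2, B', hC2, hB', hneBB, 𝔅 \ (Sp a ∪ Sp b), fun Bi hBi => hBi.1, ?_, ?_⟩
  · intro σ Bi hBi
    have hBiz : Bi z ≠ a ∧ Bi z ≠ b := by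
      constructor
      · intro h; exact hBi.2 (Or.inl ⟨hBi.1, h⟩)
      · intro h; exact hBi.2 (Or.inr ⟨hBi.1, h⟩)
    have hsets : {x | IsMatch adj x ∧ Bi x = C2 x} = {x | IsMatch adj x ∧ Bi x = B' x} := by
      ext x
      by_cases hxz : x = z
      · subst hxz
        apply iff_of_false
        · rintro ⟨-, h⟩; exact hBiz.1 (h.trans hC2z)
        · rintro ⟨-, h⟩; exact hBiz.2 (h.trans hB'z)
      · have : B' x = C2 x := Function.update_of_ne hxz _ _
        constructor
        · rintro ⟨hm, h⟩; exact ⟨hm, h.trans this.symm⟩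
        · rintro ⟨hm, h⟩; exact ⟨hm, h.trans this⟩
    rw [score, score, hsets]
  · have hXsub : Sp a ∪ Sp b ⊆ 𝔅 := Set.union_subset (hSp𝔅 a) (hSp𝔅 b)
    rw [Set.ncard_diff hXsub (Set.toFinite _),
      Set.ncard_union_eq (hdisjSp a b hab) (Set.toFinite _) (Set.toFinite _)]
    have hle : (Sp a ∪ Sp b).ncard ≤ 𝔅.ncard := Set.ncard_le_ncard hXsub (Set.toFinite _)
    rw [Set.ncard_union_eq (hdisjSp a b hab) (Set.toFinite _) (Set.toFinite _)] at hle
    omega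

end Aux

/-- For every single-elimination tournament with at least 2 players
and `N` total brackets, `res(T,σ) > N/4` for every scoring system σ. -/
theorem statement_7 {V : Type*} [Finite V] (adj : V → V → Prop)
    (hT : IsSETournament adj) (h2 : 2 ≤ (players adj).ncard)
    (N : ℕ) (hN : N = {B : V → V | IsBracket adj B}.ncard)
    (σ : V → ℝ) (hσ : IsScoring adj σ) :
    (N : ℝ) / 4 < (resT adj σ : ℝ) := by
  letI : DecidableEq V := Classical.decEq V
  have hmemN : (N + 1) ∈ {r : ℕ | ∀ 𝓑 : Set (V → V), (∀ B ∈ 𝓑, IsBracket adj B) →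
      𝓑.ncard = r → IsResolving adj σ 𝓑} := by
    intro 𝓑 h1 hcard
    exfalso
    have hsub : 𝓑 ⊆ {B : V → V | IsBracket adj B} := h1
    have hle := Set.ncard_le_ncard hsub (Set.toFinite _)
    omega
  have hres : resT adj σ ∈ {r : ℕ | ∀ 𝓑 : Set (V → V), (∀ B ∈ 𝓑, IsBracket adj B) →
      𝓑.ncard = r → IsResolving adj σ 𝓑} := Nat.sInf_mem ⟨N + 1, hmemN⟩
  set r := resT adj σ with hr
  by_contra hcon
  push_neg at hcon
  have h4r : 4 * r ≤ N := by
    have h1 : (4 * r : ℝ) ≤ N := by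
      rw [le_div_iff₀ (by norm_num : (0:ℝ) < 4)] at hcon
      linarith
    exact_mod_cast h1
  obtain ⟨B, B', hB, hB', hne, G, hGbr, hGsc, hGcard⟩ := key_lemma hT h2
  rw [← hN] at hGcard
  have hrG : r ≤ G.ncard := le_trans (by omega) hGcard
  obtain ⟨𝓑, h𝓑G, h𝓑card⟩ := Set.exists_subset_card_eq hrG
  obtain ⟨Bi, hBi, hne_sc⟩ := hres 𝓑 (fun Bb hBb => hGbr Bb (h𝓑G hBb)) h𝓑card B B' hB hB' hne
  exact hne_sc (hGsc σ Bi (h𝓑G hBi))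


end SETour
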